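/- arXiv:2403.16762 — 2 statements merged into one kernel-verified Lean document; each statement's English description precedes it below -/
import Mathlib

section
/- In any implicative-orthomodular lattice X, (x ⊓ y) → (y ⊓ x) = 1 and (x ⊔ y) → (y ⊔ x) = 1 for all x, y. -/
class InvBE (X : Type*) where
  imp : X → X → X
  one : X
  zero : X
  imp_self : ∀ x, imp x x = one
  imp_one : ∀ x, imp x one = one
  one_imp : ∀ x, imp one x = x
  exch : ∀ x y z, imp x (imp y z) = imp y (imp x z)
  zero_imp : ∀ x, imp zero x = one
  invol : ∀ x, imp (imp x zero) zero = x

namespace InvBE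

variable {X : Type*} [InvBE X]

/-- `x* = x → 0` -/
def star (x : X) : X := imp x zero

/-- `x ⊔ y = (x → y) → y` -/
def sup (x y : X) : X := imp (imp x y) y

/-- `x ⊓ y = ((x* → y*) → y*)*` -/
def inf (x y : X) : X := star (imp (imp (star x) (star y)) (star y))

/-- `x ≤_L y` iff `x = (x → y*)*` -/
def leL (x y : X) : Prop := x = star (imp x (star y))

/-- `x ≤_Q y` iff `x = x ⊓ y` -/
def leQ (x y : X) : Prop := x = inf x y

/-- `x C y` iff `x = (x → y*) → (x → y)*` -/
def Comm (x y : X) : Prop := x = imp (imp x (star y)) (star (imp x y))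

/-- divisibility condition for the pair `(x, y)`: `x → (x → y)* = x → y*` -/
def Idiv (x y : X) : Prop := imp x (star (imp x y)) = imp x (star y)

/-- `Idis₁`: `((x* → y) → z*)* = (x → z*) → (y → z*)*` -/
def Idis1 (x y z : X) : Prop :=
  star (imp (imp (star x) y) (star z)) = imp (imp x (star z)) (star (imp y (star z)))

/-- `Idis₂`: `((x → y*) → z)* = (z* → x) → (z* → y)*` -/
def Idis2 (x y z : X) : Prop :=
  star (imp (imp x (star y)) z) = imp (imp (star z) x) (star (imp (star z) y))

/-- a triple is distributive if all its permutations satisfy `Idis₁` and `Idis₂` -/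
def DistribTriple (x y z : X) : Prop :=
  Idis1 x y z ∧ Idis1 x z y ∧ Idis1 y x z ∧ Idis1 y z x ∧ Idis1 z x y ∧ Idis1 z y x ∧
  Idis2 x y z ∧ Idis2 x z y ∧ Idis2 y x z ∧ Idis2 y z x ∧ Idis2 z x y ∧ Idis2 z y x

end InvBE

/-- implicative involutive BE algebra: `(x → y) → x = x` -/
class ImplInvBE (X : Type*) extends InvBE X where
  impl : ∀ x y, imp (imp x y) x = x

/-- implicative-orthomodular lattice: `x ⊓ (y → x) = x` -/
class IOML (X : Type*) extends ImplInvBE X where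
  iom : ∀ x y, InvBE.inf x (imp y x) = x

open InvBE

section Aux

variable {X : Type*} [InvBE X]

/-- contraposition: `x* → y* = y → x` -/
lemma my_contrap (x y : X) : imp (star x) (star y) = imp y x := by
  show imp (imp x zero) (imp y zero) = imp y x
  rw [exch, invol]

/-- `x → y* = y → x*` -/
lemma my_swapstar (x y : X) : imp x (star y) = imp y (star x) :=
  exch x y zero

lemma my_starstar (x : X) : star (star x) = x := invol x

end Aux

section AuxIOML

variable {X : Type*} [IOML X]

/-- key consequence of orthomodularity: `(a→b) → ((a→b)→b)* = b*` -/
lemma my_key (a b : X) : imp (imp a b) (star (imp (imp a b) b)) = star b := by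
  have h := IOML.iom b a
  unfold InvBE.inf at h
  rw [my_contrap] at h
  -- h : star (imp (imp (imp a b) b) (star (imp a b))) = b
  have h2 : imp (imp (imp a b) b) (star (imp a b)) = star b := by
    have h3 := congrArg InvBE.star h
    rwa [my_starstar] at h3
  rw [my_swapstar] at h2
  exact h2

/-- `((a→b)→b) → a = b → a` -/
lemma my_supimp (a b : X) : imp (imp (imp a b) b) a = imp b a := by
  have h1 := my_key a b
  have : imp b a = imp (imp (imp a b) b) a := by
    calc imp b a
        = imp (star a) (star b) := (my_contrap a b).symm
      _ = imp (star a) (imp (imp a b) (star (imp (imp a b) b))) := by rw [h1]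
      _ = imp (imp a b) (imp (star a) (star (imp (imp a b) b))) := exch _ _ _
      _ = imp (imp a b) (imp (imp (imp a b) b) a) := by rw [my_contrap]
      _ = imp (imp (imp a b) b) (imp (imp a b) a) := exch _ _ _
      _ = imp (imp (imp a b) b) a := by rw [ImplInvBE.impl]
  exact this.symm

/-- sup semi-commutativity -/
lemma my_supcomm (a b : X) : imp (sup a b) (sup b a) = InvBE.one := by
  show imp (imp (imp a b) b) (imp (imp b a) a) = InvBE.one
  rw [exch, my_supimp, InvBE.imp_self]

end AuxIOML

theorem stmt8 {X : Type*} [IOML X] (x y : X) :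
    imp (inf x y) (inf y x) = InvBE.one ∧ imp (sup x y) (sup y x) = InvBE.one := by
  constructor
  · show imp (star (imp (imp (star x) (star y)) (star y)))
        (star (imp (imp (star y) (star x)) (star x))) = InvBE.one
    rw [my_contrap]
    exact my_supcomm (star y) (star x)
  · exact my_supcomm x y
end

section
/- In an implicative-orthomodular lattice X, if x commutes with z and y commutes with z, then x → y commutes with z. Consequently, the center C(X) = {x ∈ X : xCy for all y ∈ X} is closed under →, contains 0 and 1, and is an implicative-Boolean algebra (an implicative involutive BE algebra satisfying x → (x → y)* = x → y*). -/
namespace IOMLAux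

open InvBE

variable {X : Type*} [IOML X]

lemma star_star (x : X) : star (star x) = x := invol x

lemma star_one : star (one : X) = zero := one_imp zero

lemma star_zero : star (zero : X) = one := zero_imp zero

lemma contrap (x y : X) : imp x (star y) = imp y (star x) := exch x y zero

lemma starContra (x y : X) : imp (star x) y = imp (star y) x := by
  conv_lhs => rw [← star_star y, contrap, star_star]

lemma impK (x y : X) : imp (imp x y) x = x := ImplInvBE.impl x y

lemma lemE (x y : X) : imp x (star (imp y x)) = star x := by
  have h := impK (star x) (star y)
  rw [contrap (star x) y, star_star] at h
  rw [contrap x (imp y x)]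
  exact h

instance : Max X := ⟨fun a b => imp (star a) b⟩
instance : Min X := ⟨fun a b => star (imp a (star b))⟩

lemma sup_def (a b : X) : a ⊔ b = imp (star a) b := rfl
lemma inf_def (a b : X) : a ⊓ b = star (imp a (star b)) := rfl

lemma jComm (a b : X) : a ⊔ b = b ⊔ a := starContra a b

lemma jAssoc (a b c : X) : a ⊔ b ⊔ c = a ⊔ (b ⊔ c) := by
  rw [sup_def (a ⊔ b) c, starContra, sup_def a b, exch, jComm b c, sup_def c b, sup_def a]

lemma starJ (a b : X) : star (a ⊔ b) = star a ⊓ star b := by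
  rw [inf_def, sup_def, star_star]

lemma starM (a b : X) : star (a ⊓ b) = star a ⊔ star b := by
  rw [inf_def, sup_def, star_star, star_star]

lemma star_inj {a b : X} (h : star a = star b) : a = b := by
  rw [← star_star a, h, star_star]

lemma mComm (a b : X) : a ⊓ b = b ⊓ a := by
  apply star_inj; rw [starM, starM, jComm]

lemma mAssoc (a b c : X) : a ⊓ b ⊓ c = a ⊓ (b ⊓ c) := by
  apply star_inj; rw [starM, starM, starM, starM, jAssoc]

lemma absorb1 (a b : X) : a ⊔ a ⊓ b = a := by
  rw [sup_def, inf_def, contrap a b, lemE (star a) b, star_star]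

lemma absorb2 (a b : X) : a ⊓ (a ⊔ b) = a := by
  rw [inf_def, sup_def, starContra a b, lemE a (star b), star_star]

instance : Lattice X := Lattice.mk' jComm jAssoc mComm mAssoc absorb1 absorb2

lemma le_one (a : X) : a ≤ (one : X) := sup_eq_right.mp (imp_one (star a))

lemma zero_le (a : X) : (zero : X) ≤ a := by
  apply sup_eq_right.mp
  rw [sup_def, star_zero, one_imp]

lemma imp_eq (a b : X) : imp a b = star a ⊔ b := by rw [sup_def, star_star]

lemma sup_star_self (a : X) : a ⊔ star a = one := by rw [sup_def, InvBE.imp_self]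

lemma inf_star_self (a : X) : a ⊓ star a = zero := by
  rw [inf_def, star_star, InvBE.imp_self, star_one]

lemma star_le_star {a b : X} (h : a ≤ b) : star b ≤ star a := by
  apply inf_eq_left.mp
  rw [← starJ, jComm, sup_eq_right.mpr h]

lemma inf_eq' (a b : X) : InvBE.inf a b = (a ⊔ star b) ⊓ b := rfl

lemma omLaw {a b : X} (h : a ≤ b) : a ⊔ (star a ⊓ b) = b := by
  have e : imp a (star b) = star a := by
    rw [imp_eq, ← starM, inf_eq_left.mpr h]
  have h1 := IOML.iom (star b) a
  rw [e, inf_eq', star_star] at h1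
  -- h1 : (star b ⊔ a) ⊓ star a = star b
  have h2 := congrArg InvBE.star h1
  rw [starM, starJ, star_star, star_star] at h2
  -- h2 : (b ⊓ star a) ⊔ a = b
  rw [jComm, mComm] at h2
  exact h2

/-- lattice-theoretic commutativity -/
def CommL (a b : X) : Prop := a = (a ⊓ b) ⊔ (a ⊓ star b)

lemma comm_iff (a b : X) : Comm a b ↔ CommL a b := by
  unfold Comm CommL
  have e1 : imp (imp a (star b)) (star (imp a b)) =
      star (imp a (star b)) ⊔ star (imp a b) := imp_eq _ _
  have e2 : star (imp a (star b)) = a ⊓ b := by rw [inf_def]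
  have e3 : star (imp a b) = a ⊓ star b := by rw [inf_def, star_star]
  rw [e1, e2, e3]

lemma sub_le (a b : X) : (a ⊓ b) ⊔ (a ⊓ star b) ≤ a :=
  sup_le inf_le_left inf_le_left

lemma commL_of_le {a b : X} (h : a ≤ (a ⊓ b) ⊔ (a ⊓ star b)) : CommL a b :=
  le_antisymm h (sub_le a b)

lemma commL_star {a b : X} (h : CommL a b) : CommL a (star b) := by
  unfold CommL
  rw [star_star, jComm]
  exact h

lemma le_commL {a b : X} (h : a ≤ b) : CommL a b := by
  unfold CommL
  rw [inf_eq_left.mpr h, sup_inf_self]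

lemma commL_sup {x y z : X} (hx : CommL x z) (hy : CommL y z) : CommL (x ⊔ y) z := by
  apply commL_of_le
  have h1 : x ≤ (x ⊔ y) ⊓ z ⊔ (x ⊔ y) ⊓ star z := by
    calc x = (x ⊓ z) ⊔ (x ⊓ star z) := hx
    _ ≤ _ := sup_le_sup (inf_le_inf_right z le_sup_left) (inf_le_inf_right _ le_sup_left)
  have h2 : y ≤ (x ⊔ y) ⊓ z ⊔ (x ⊔ y) ⊓ star z := by
    calc y = (y ⊓ z) ⊔ (y ⊓ star z) := hy
    _ ≤ _ := sup_le_sup (inf_le_inf_right z le_sup_right) (inf_le_inf_right _ le_sup_right)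
  exact sup_le h1 h2

lemma commL_symm {a b : X} (h : CommL a b) : CommL b a := by
  set t := (b ⊓ a) ⊔ (b ⊓ star a) with ht
  have htb : t ≤ b := sub_le b a
  have hom : t ⊔ (star t ⊓ b) = b := omLaw htb
  set c := star t ⊓ b with hc
  have hcb : c ≤ b := inf_le_right
  have hct : c ≤ star t := inf_le_left
  have hca : c ≤ star a := by
    have h1 : c ≤ star (b ⊓ a) := le_trans hct (star_le_star le_sup_left)
    have h2 : c ≤ star (a ⊓ star b) := by
      have : a ⊓ star b ≤ star c := le_trans inf_le_right (star_le_star hcb)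
      have := star_le_star this
      rwa [star_star] at this
    have h3 : c ≤ star (b ⊓ a) ⊓ star (a ⊓ star b) := le_inf h1 h2
    rw [← starJ, mComm b a, ← h] at h3
    exact h3
  have hc2 : c ≤ b ⊓ star a := le_inf hcb hca
  have hc2' : c ≤ star (b ⊓ star a) := le_trans hct (star_le_star le_sup_right)
  have hczero : c = zero := le_antisymm
    (by calc c ≤ (b ⊓ star a) ⊓ star (b ⊓ star a) := le_inf hc2 hc2'
        _ = zero := inf_star_self _)
    (zero_le c)
  have : t ⊔ zero = b := by rw [← hczero]; exact hom
  have htz : t ⊔ zero = t := star_star t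
  unfold CommL
  rw [← ht, ← htz]
  exact this.symm

lemma commL_starl {x z : X} (h : CommL x z) : CommL (star x) z :=
  commL_symm (commL_star (commL_symm h))

lemma commL_sup_inf {a b : X} (h : CommL a b) : a ⊔ (star a ⊓ b) = a ⊔ b := by
  apply le_antisymm
  · exact sup_le le_sup_left (le_trans inf_le_right le_sup_right)
  · apply sup_le le_sup_left
    calc b = (b ⊓ a) ⊔ (b ⊓ star a) := commL_symm h
    _ ≤ a ⊔ (star a ⊓ b) := by
        apply sup_le (le_trans inf_le_right le_sup_left)
        exact le_trans (le_of_eq (mComm b (star a))) le_sup_right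

lemma main1 (x y z : X) (hx : Comm x z) (hy : Comm y z) : Comm (imp x y) z := by
  rw [comm_iff] at hx hy ⊢
  rw [imp_eq]
  exact commL_sup (commL_starl hx) hy

lemma main3 (u : X) : Comm (zero : X) u := by
  unfold Comm
  rw [InvBE.zero_imp, InvBE.zero_imp, InvBE.one_imp, star_one]

lemma main4 (u : X) : Comm (one : X) u := by
  unfold Comm
  rw [InvBE.one_imp, InvBE.one_imp, InvBE.imp_self]

lemma main5 (x y : X) (hx : ∀ u : X, Comm x u) (_hy : ∀ u : X, Comm y u) :
    imp x (star (imp x y)) = imp x (star y) := by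
  have hc : CommL (star x) (star y) :=
    commL_starl ((comm_iff x (star y)).mp (hx (star y)))
  have e1 : star (imp x y) = x ⊓ star y := by rw [inf_def, star_star]
  have key := commL_sup_inf hc
  rw [star_star] at key
  rw [e1, imp_eq, imp_eq x (star y), key]

end IOMLAux

open InvBE

theorem stmt19 {X : Type*} [IOML X] :
    (∀ x y z : X, Comm x z → Comm y z → Comm (imp x y) z) ∧
    (∀ x y : X, (∀ u : X, Comm x u) → (∀ u : X, Comm y u) → (∀ u : X, Comm (imp x y) u)) ∧
    (∀ u : X, Comm (InvBE.zero : X) u) ∧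
    (∀ u : X, Comm (InvBE.one : X) u) ∧
    (∀ x y : X, (∀ u : X, Comm x u) → (∀ u : X, Comm y u) →
      imp x (star (imp x y)) = imp x (star y)) := by
  exact ⟨IOMLAux.main1, fun x y hx hy u => IOMLAux.main1 x y u (hx u) (hy u),
    IOMLAux.main3, IOMLAux.main4, IOMLAux.main5⟩
end
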